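/- The converse of 'subsumption by matching implies subsumption' fails: for the signature with unary function symbols f, g and constants a, b, the set M = {a, b, f(a), f(b), g(a), g(b)}, and the classes A = {f(x)∈M ∧ g(a)∈M ∧ g(b)∈M ∥ f(x), g(a), g(b)} and B = {f(a)∈M ∧ f(b)∈M ∧ g(x)∈M ∥ f(a), f(b), g(x)} (all terms of each class carrying the same constraint), one has gnd(A) = gnd(B) — hence A subsumes B and B subsumes A — yet neither A subsumes B by matching nor B subsumes A by matching. -/

import Mathlib

namespace NGCC

inductive Tm (F : Type) : Type
  | var : ℕ → Tm F
  | app : F → List (Tm F) → Tm F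

instance {F : Type} : Inhabited (Tm F) := ⟨Tm.var 0⟩

namespace Tm
variable {F : Type}

def subst (σ : ℕ → Tm F) : Tm F → Tm F
  | var x => σ x
  | app f ts => app f (ts.attach.map fun t => t.1.subst σ)
  decreasing_by simp only [app.sizeOf_spec]; have h := List.sizeOf_lt_of_mem t.2; omega

def varsList : Tm F → List ℕ
  | var x => [x]
  | app _ ts => (ts.attach.map fun t => t.1.varsList).flatten
  decreasing_by simp only [app.sizeOf_spec]; have h := List.sizeOf_lt_of_mem t.2; omega

def varsIn (t : Tm F) : Set ℕ := {x | x ∈ t.varsList}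

def Ground (t : Tm F) : Prop := t.varsList = []

def size : Tm F → ℕ
  | var _ => 1
  | app _ ts => 1 + (ts.attach.map fun t => t.1.size).sum
  decreasing_by simp only [app.sizeOf_spec]; have h := List.sizeOf_lt_of_mem t.2; omega

def count (x : ℕ) : Tm F → ℕ
  | var y => if y = x then 1 else 0
  | app _ ts => (ts.attach.map fun t => count x t.1).sum
  decreasing_by simp only [app.sizeOf_spec]; have h := List.sizeOf_lt_of_mem t.2; omega

def eval {α : Type} (I : F → List α → α) (v : ℕ → α) : Tm F → α
  | var x => v x
  | app f ts => I f (ts.attach.map fun t => t.1.eval I v)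
  decreasing_by simp only [app.sizeOf_spec]; have h := List.sizeOf_lt_of_mem t.2; omega

end Tm


abbrev Subst (F : Type) := ℕ → Tm F

def Subst.dom {F : Type} (σ : Subst F) : Set ℕ := {x | σ x ≠ Tm.var x}

def Subst.comp {F : Type} (σ δ : Subst F) : Subst F := fun x => (σ x).subst δ

structure CTerm (F : Type) where
  constr : Set (Tm F)
  term : Tm F

abbrev CClass (F : Type) := Set (CTerm F)

variable {F : Type}

/-- Application of a substitution to a constraint (set of atoms `u ∈ M`). -/
def substConstr (Γ : Set (Tm F)) (σ : Subst F) : Set (Tm F) := (fun u => u.subst σ) '' Γ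

def CTerm.subst (ct : CTerm F) (σ : Subst F) : CTerm F :=
  ⟨substConstr ct.constr σ, ct.term.subst σ⟩

def substClass (A : CClass F) (σ : Subst F) : CClass F := (fun ct => ct.subst σ) '' A

/-- `Γσ` is true: every atom of `Γσ` belongs to `M`. -/
def ConstrHolds (M : Set (Tm F)) (Γ : Set (Tm F)) (σ : Subst F) : Prop :=
  substConstr Γ σ ⊆ M

/-- Satisfiability of a constraint with respect to `M`. -/
def ConstrSat (M : Set (Tm F)) (Γ : Set (Tm F)) : Prop :=
  ∃ σ : Subst F, ConstrHolds M Γ σ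

/-- `σ` is grounding for the class `A` (for all its constrained terms). -/
def GroundingForClass (σ : Subst F) (A : CClass F) : Prop :=
  ∀ ct ∈ A, (ct.term.subst σ).Ground ∧ ∀ u ∈ ct.constr, (u.subst σ).Ground

/-- Separating variables of a class. -/
def sepVars (A : CClass F) : Set ℕ := ⋂ ct ∈ A, (CTerm.term ct).varsIn

/-- All variables of the terms of a class. -/
def termVars (A : CClass F) : Set ℕ := ⋃ ct ∈ A, (CTerm.term ct).varsIn

/-- Free variables of a class. -/
def freeVars (A : CClass F) : Set ℕ := termVars A \ sepVars A

/-- All variables occurring in a class (terms and constraints). -/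
def varsAll (A : CClass F) : Set ℕ :=
  ⋃ ct ∈ A, ((CTerm.term ct).varsIn ∪ ⋃ u ∈ CTerm.constr ct, u.varsIn)

/-- `gnd'(A)`. -/
def gnd' (M : Set (Tm F)) (A : CClass F) : Set (CClass F) :=
  { B | ∃ σ : Subst F, Subst.dom σ = sepVars A ∧ (∀ x ∈ Subst.dom σ, (σ x).Ground) ∧
      B = { ct' | ∃ ct ∈ A, ConstrSat M (substConstr (CTerm.constr ct) σ) ∧ ct' = ct.subst σ } }

/-- `gnd(A)`: sets of ground terms. -/
def gnd (M : Set (Tm F)) (A : CClass F) : Set (Set (Tm F)) :=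
  { S | ∃ B ∈ gnd' M A,
      S = { t | ∃ σ : Subst F, GroundingForClass σ B ∧
              ∃ ct ∈ B, ConstrHolds M (CTerm.constr ct) σ ∧ t = (CTerm.term ct).subst σ } }

/-- The elements of `gnd(A)` regarded as classes of constrained ground terms. -/
def gndCl (M : Set (Tm F)) (A : CClass F) : Set (CClass F) :=
  { S | ∃ B ∈ gnd' M A,
      S = { ct' | ∃ σ : Subst F, GroundingForClass σ B ∧
              ∃ ct ∈ B, ConstrHolds M (CTerm.constr ct) σ ∧ ct' = ct.subst σ } }

/-- `B` subsumes `A`. -/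
def Subsumes (M : Set (Tm F)) (B A : CClass F) : Prop :=
  ∀ A' ∈ gnd M A, ∃ B' ∈ gnd M B, A' ⊆ B'

/-- `A` is `M`-constrained: the atom `sᵢ ∈ M` occurs in `Γᵢ` for each `Γᵢ ∥ sᵢ ∈ A`. -/
def MConstrained (A : CClass F) : Prop := ∀ ct ∈ A, CTerm.term ct ∈ CTerm.constr ct

/-- `ρ` is a renaming of the free variables of `A` to fresh variables. -/
def IsNormRenaming (A : CClass F) (ρ : Subst F) : Prop :=
  (∀ x, ∃ y, ρ x = Tm.var y) ∧ (∀ x, x ∉ freeVars A → ρ x = Tm.var x) ∧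
  (∀ x ∈ freeVars A, ∀ x' ∈ freeVars A, ρ x = ρ x' → x = x') ∧
  (∀ x ∈ freeVars A, ∀ y, ρ x = Tm.var y → y ∉ varsAll A)

/-- The normal class `norm(A)` for the renaming `ρ`. -/
def normC (A : CClass F) (ρ : Subst F) : CClass F :=
  { ct' | ∃ ct ∈ A, ct' = ⟨CTerm.constr ct ∪ substConstr (CTerm.constr ct) ρ, CTerm.term ct⟩ } ∪
  { ct' | ∃ ct ∈ A, ((CTerm.term ct).varsIn ∩ freeVars A).Nonempty ∧
      ct' = ⟨CTerm.constr ct ∪ substConstr (CTerm.constr ct) ρ, (CTerm.term ct).subst ρ⟩ }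

/-- `Aμ` for a grounding substitution `μ`: the set of ground terms
`{sμ | Γ ∥ s ∈ A and Γμ true}`. -/
def applyClass (M : Set (Tm F)) (A : CClass F) (μ : Subst F) : Set (Tm F) :=
  { t | ∃ ct ∈ A, ConstrHolds M (CTerm.constr ct) μ ∧ t = (CTerm.term ct).subst μ }

/-- Subterm relation. -/
inductive Subterm {F : Type} : Tm F → Tm F → Prop
  | refl (t : Tm F) : Subterm t t
  | app {s t : Tm F} (f : F) (ts : List (Tm F)) : t ∈ ts → Subterm s t → Subterm s (Tm.app f ts)

/-- `s` occurs as a (sub)term in `Π`. -/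
def OccursIn (s : Tm F) (P : Set (CClass F)) : Prop :=
  ∃ A ∈ P, ∃ ct ∈ A, Subterm s (CTerm.term ct) ∨ ∃ u ∈ CTerm.constr ct, Subterm s u

/-- `M` is `Π`-closed for the ground term `t`. -/
def PiClosed (M : Set (Tm F)) (P : Set (CClass F)) (t : Tm F) : Prop :=
  ∀ s, OccursIn s P → ∀ σ : Subst F, s.subst σ ∈ M →
    ∀ δ : Subst F, (∀ x, σ x ≠ δ x → δ x = t) → s.subst δ ∈ M

/-- Semantic equational consequence: every model of the (implicitly universally
quantified) equations is a model of `s ≈ t`. -/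
def Entails (Eqs : Set (Tm F × Tm F)) (s t : Tm F) : Prop :=
  ∀ (α : Type) (_ : Nonempty α) (I : F → List α → α) (v : ℕ → α),
    (∀ e ∈ Eqs, ∀ w : ℕ → α, Tm.eval I w e.1 = Tm.eval I w e.2) →
    Tm.eval I v s = Tm.eval I v t

/-- `gnd_M(E)`: ground instances of equations of `E` with all ground terms in `M`. -/
def gndM (M : Set (Tm F)) (E : Set (Tm F × Tm F)) : Set (Tm F × Tm F) :=
  { e | ∃ p ∈ E, ∃ σ : Subst F,
      e = (Tm.subst σ p.1, Tm.subst σ p.2) ∧ Tm.subst σ p.1 ∈ M ∧ Tm.subst σ p.2 ∈ M }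

def IsUnifier (μ : Subst F) (s t : Tm F) : Prop := s.subst μ = t.subst μ

def IsMGU (μ : Subst F) (s t : Tm F) : Prop :=
  IsUnifier μ s t ∧ ∀ τ : Subst F, IsUnifier τ s t → ∃ δ : Subst F, τ = Subst.comp μ δ

/-- Simultaneous most general unifier of the equations `s₁ = t₁` and `s₂ = t₂`. -/
def IsSimMGU (μ : Subst F) (s₁ t₁ s₂ t₂ : Tm F) : Prop :=
  IsUnifier μ s₁ t₁ ∧ IsUnifier μ s₂ t₂ ∧
  ∀ τ : Subst F, IsUnifier τ s₁ t₁ → IsUnifier τ s₂ t₂ → ∃ δ : Subst F, τ = Subst.comp μ δ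

/-- Conjoin a constraint to every constrained term of a class. -/
def addConstr (A : CClass F) (Γ : Set (Tm F)) : CClass F :=
  { ct' | ∃ ct ∈ A, ct' = ⟨CTerm.constr ct ∪ Γ, CTerm.term ct⟩ }

/-- The rules of the calculus CC(X). -/
inductive Step {F : Type} (M : Set (Tm F)) : Set (CClass F) → Set (CClass F) → Prop
  | merge (P : Set (CClass F)) (A B C' : CClass F) (ρA ρB μ : Subst F) (ct₁ ct₂ : CTerm F)
      (hA : A ∈ P) (hB : B ∈ P)
      (hρA : IsNormRenaming A ρA) (hρB : IsNormRenaming B ρB)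
      (h1 : ct₁ ∈ A) (h2 : ct₂ ∈ B)
      (hmgu : IsMGU μ ct₁.term ct₂.term)
      (hC' : C' = substClass (addConstr (normC A ρA) (ct₁.constr ∪ ct₂.constr) ∪
                               addConstr (normC B ρB) (ct₁.constr ∪ ct₂.constr)) μ)
      (hnsub : ∀ C ∈ P, ¬ Subsumes M C C') :
      Step M P (insert C' P)
  | deduction (P : Set (CClass F)) (A B C' : CClass F) (f : F)
      (ss ts ss' ts' : List (Tm F)) (Γ Δ : Set (Tm F)) (Γs Δs : List (Set (Tm F))) (μ : Subst F)
      (hA : A ∈ P) (hB : B ∈ P)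
      (h1 : (⟨Γ, Tm.app f ss⟩ : CTerm F) ∈ A)
      (h2 : (⟨Δ, Tm.app f ts⟩ : CTerm F) ∈ B)
      (hl1 : ss'.length = ss.length) (hl2 : ts'.length = ss.length)
      (hl3 : ts.length = ss.length) (hl4 : Γs.length = ss.length) (hl5 : Δs.length = ss.length)
      (hside : ∀ i < ss.length, ∃ D ∈ P, ∃ ρ : Subst F, IsNormRenaming D ρ ∧
          (⟨Γs[i]!, ss'[i]!⟩ : CTerm F) ∈ normC D ρ ∧ (⟨Δs[i]!, ts'[i]!⟩ : CTerm F) ∈ normC D ρ)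
      (hmgu : IsSimMGU μ (Tm.app f ss') (Tm.app f ss) (Tm.app f ts') (Tm.app f ts))
      (hC' : C' = substClass
          ({⟨Γ ∪ Δ ∪ ⋃₀ {G | G ∈ Γs} ∪ ⋃₀ {G | G ∈ Δs}, Tm.app f ss'⟩,
            ⟨Γ ∪ Δ ∪ ⋃₀ {G | G ∈ Γs} ∪ ⋃₀ {G | G ∈ Δs}, Tm.app f ts'⟩} : CClass F) μ)
      (hnsub : ∀ C ∈ P, ¬ Subsumes M C C') :
      Step M P (insert C' P)
  | subsump (P : Set (CClass F)) (A B : CClass F)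
      (hA : A ∈ P) (hB : B ∈ P) (hne : A ≠ B) (hsub : Subsumes M B A) :
      Step M P (P \ {A})

/-- The single-term class `{f(x₁,…,x_k) ∈ M ∥ f(x₁,…,x_k)}`. -/
def singleTermClass (ar : F → ℕ) (f : F) : CClass F :=
  {⟨{Tm.app f ((List.range (ar f)).map Tm.var)}, Tm.app f ((List.range (ar f)).map Tm.var)⟩}

/-- The initial state `Π₀` of CC(X) for the equations `E`. -/
def initState (ar : F → ℕ) (E : Set (Tm F × Tm F)) : Set (CClass F) :=
  { A | ∃ p ∈ E, A = ({⟨{p.1, p.2}, p.1⟩, ⟨{p.1, p.2}, p.2⟩} : CClass F) } ∪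
  { A | ∃ f : F, A = singleTermClass ar f }

/-- `B` subsumes `A` by matching. -/
def SubsumesByMatching (M : Set (Tm F)) (B A : CClass F) : Prop :=
  ∃ σ : Subst F, Subst.dom σ ⊆ sepVars B ∧ (∀ x ∈ sepVars B, (σ x).varsIn ⊆ varsAll A) ∧
    ∀ ct ∈ A, ∃ τ : Subst F, Subst.dom τ ⊆ freeVars B ∧
      (∀ y ∈ freeVars B, (τ y).varsIn ⊆ varsAll A) ∧
      ∃ ct' ∈ B, CTerm.term ct = ((CTerm.term ct').subst σ).subst τ ∧
        ∀ δ : Subst F, ConstrHolds M (CTerm.constr ct) δ →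
          ∃ δ' : Subst F,
            ConstrHolds M (substConstr (substConstr (substConstr (CTerm.constr ct') σ) τ) δ) δ'

/-- `M` determined by the symbol-count ordering and a bound `β`. -/
def Mle (β : Tm F) : Set (Tm F) := { t | t.Ground ∧ t.size ≤ β.size }

def varsFinset (t : Tm F) : Finset ℕ := t.varsList.toFinset

/-- Truth of the LIA abstraction `lic(t ⪯ β)` under an integer assignment `v`. -/
def licHolds (t β : Tm F) (v : ℕ → ℕ) : Prop :=
  (∀ x ∈ varsFinset t, 1 ≤ v x) ∧
  (∑ x ∈ varsFinset t, (t.count x : ℤ) * (v x : ℤ)) ≤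
    (β.size : ℤ) - ((t.size : ℤ) - ∑ x ∈ varsFinset t, (t.count x : ℤ))


/-- The signature of the counterexample: unary `f`, `g` and constants `a`, `b`. -/
inductive F12 : Type
  | f | g | a | b


/-!
Each of the two classes contains a ground term, so it has no separating variables; `gnd` of
either class is then the single set of its ground instances whose constraints hold, and for both
classes this set is `{f(a), f(b), g(a), g(b)}`. Subsumption by matching, however, needs every term
of the subsumed class to be an instance of a term of the subsuming one, and `f(x)` is an instance
of none of `f(a), f(b), g(x)`, nor `g(x)` of any of `f(x), g(a), g(b)`.
-/

namespace Tm

@[simp] theorem var_subst (σ : Subst F) (x : ℕ) : (var x).subst σ = σ x := by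
  rw [subst]

@[simp] theorem app_subst (σ : Subst F) (h : F) (ts : List (Tm F)) :
    (app h ts).subst σ = app h (ts.map (subst σ)) := by
  rw [subst, List.map_attach_eq_pmap, List.pmap_eq_map]

@[simp] theorem varsList_var (x : ℕ) : (var x : Tm F).varsList = [x] := by
  rw [varsList]

@[simp] theorem varsList_app (h : F) (ts : List (Tm F)) :
    (app h ts).varsList = (ts.map varsList).flatten := by
  rw [varsList, List.map_attach_eq_pmap, List.pmap_eq_map]

theorem subst_var : ∀ t : Tm F, t.subst var = t
  | var x => by simp
  | app h ts => by
    simp only [app_subst, app.injEq, true_and]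
    conv_rhs => rw [← List.map_id ts]
    exact List.map_congr_left fun t _ => subst_var t

theorem subst_subst (σ τ : Subst F) : ∀ t : Tm F, (t.subst σ).subst τ = t.subst (σ.comp τ)
  | var x => by simp [Subst.comp]
  | app h ts => by
    simp only [app_subst, List.map_map, app.injEq, true_and]
    exact List.map_congr_left fun t _ => subst_subst σ τ t

theorem ground_subst {σ : Subst F} (hσ : ∀ x, (σ x).Ground) : ∀ t : Tm F, (t.subst σ).Ground
  | var x => by simpa using hσ x
  | app h ts => by
    simp only [Ground, app_subst, varsList_app, List.map_map, List.flatten_eq_nil_iff,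
      List.mem_map, Function.comp_apply, forall_exists_index, and_imp, forall_apply_eq_imp_iff₂]
    exact fun t _ => ground_subst hσ t

end Tm

theorem Subst.eq_var_of_dom_eq_empty {σ : Subst F} (h : σ.dom = ∅) : σ = Tm.var :=
  funext fun x => by_contra fun hx => (h ▸ hx : x ∈ (∅ : Set ℕ))

theorem Subst.dom_var : Subst.dom (Tm.var : Subst F) = ∅ := by
  simp [Subst.dom]

theorem substConstr_var (Γ : Set (Tm F)) : substConstr Γ Tm.var = Γ := by
  simp [substConstr, Tm.subst_var]

theorem CTerm.subst_var (ct : CTerm F) : ct.subst Tm.var = ct := by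
  simp [CTerm.subst, substConstr_var, Tm.subst_var]

theorem sepVars_eq_empty_of_ground {A : CClass F} {ct : CTerm F} (hct : ct ∈ A)
    (hg : ct.term.Ground) : sepVars A = ∅ :=
  Set.eq_empty_of_forall_notMem fun x hx => by
    have : x ∈ ct.term.varsList := Set.mem_iInter₂.1 hx ct hct
    simp [show ct.term.varsList = [] from hg] at this

theorem gnd'_eq_singleton {M : Set (Tm F)} {A : CClass F} (hA : sepVars A = ∅)
    (hsat : ∀ ct ∈ A, ConstrSat M ct.constr) : gnd' M A = {A} := by
  ext C
  simp only [gnd', Set.mem_singleton_iff]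
  constructor
  · rintro ⟨σ, hdom, -, rfl⟩
    obtain rfl := Subst.eq_var_of_dom_eq_empty (hdom.trans hA)
    ext ct
    simp only [substConstr_var, CTerm.subst_var, Set.mem_ofPred_eq]
    exact ⟨by rintro ⟨ct, h, -, rfl⟩; exact h, fun h => ⟨ct, h, hsat ct h, rfl⟩⟩
  · rintro rfl
    refine ⟨Tm.var, Subst.dom_var.trans hA.symm, by simp [Subst.dom_var], ?_⟩
    ext ct
    simp only [substConstr_var, CTerm.subst_var, Set.mem_ofPred_eq]
    exact ⟨fun h => ⟨ct, h, hsat ct h, rfl⟩, by rintro ⟨ct, h, -, rfl⟩; exact h⟩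

theorem gnd_eq_singleton {M : Set (Tm F)} {A : CClass F} (hA : sepVars A = ∅)
    (hsat : ∀ ct ∈ A, ConstrSat M ct.constr) :
    gnd M A = {⋃ σ ∈ {σ | GroundingForClass σ A}, applyClass M A σ} := by
  ext S
  simp only [gnd, gnd'_eq_singleton hA hsat, Set.mem_singleton_iff, exists_eq_left]
  constructor <;> rintro rfl <;> ext t <;> simp [applyClass]

theorem subsumes_of_gnd_subset {M : Set (Tm F)} {A B : CClass F} (h : gnd M A ⊆ gnd M B) :
    Subsumes M B A :=
  fun A' hA' => ⟨A', h hA', subset_rfl⟩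

theorem SubsumesByMatching.exists_instance {M : Set (Tm F)} {A B : CClass F}
    (h : SubsumesByMatching M B A) {ct : CTerm F} (hct : ct ∈ A) :
    ∃ ct' ∈ B, ∃ ρ : Subst F, ct.term = ct'.term.subst ρ := by
  obtain ⟨σ, -, -, hA⟩ := h
  obtain ⟨τ, -, -, ct', hct', heq, -⟩ := hA ct hct
  exact ⟨ct', hct', σ.comp τ, heq.trans (Tm.subst_subst σ τ _)⟩

theorem groundingForClass_of_ground {σ : Subst F} (hσ : ∀ x, (σ x).Ground) (A : CClass F) :
    GroundingForClass σ A :=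
  fun _ _ => ⟨Tm.ground_subst hσ _, fun u _ => Tm.ground_subst hσ u⟩

theorem subst_mem_biUnion_applyClass {M : Set (Tm F)} {A : CClass F} {σ : Subst F}
    (hσ : ∀ x, (σ x).Ground) {ct : CTerm F} (hct : ct ∈ A) (hM : ConstrHolds M ct.constr σ) :
    ct.term.subst σ ∈ ⋃ σ ∈ {σ | GroundingForClass σ A}, applyClass M A σ :=
  Set.mem_biUnion (groundingForClass_of_ground hσ A) ⟨ct, hct, hM, rfl⟩

namespace Counterexample

open F12

def ca : Tm F12 := Tm.app a []
def cb : Tm F12 := Tm.app b []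
def M : Set (Tm F12) := {ca, cb, Tm.app f [ca], Tm.app f [cb], Tm.app g [ca], Tm.app g [cb]}
def ΓA : Set (Tm F12) := {Tm.app f [Tm.var 0], Tm.app g [ca], Tm.app g [cb]}
def ΓB : Set (Tm F12) := {Tm.app f [ca], Tm.app f [cb], Tm.app g [Tm.var 0]}
def A : CClass F12 := {⟨ΓA, Tm.app f [Tm.var 0]⟩, ⟨ΓA, Tm.app g [ca]⟩, ⟨ΓA, Tm.app g [cb]⟩}
def B : CClass F12 := {⟨ΓB, Tm.app f [ca]⟩, ⟨ΓB, Tm.app f [cb]⟩, ⟨ΓB, Tm.app g [Tm.var 0]⟩}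
def S : Set (Tm F12) := {Tm.app f [ca], Tm.app f [cb], Tm.app g [ca], Tm.app g [cb]}

theorem ground_of_eq_ca_or_eq_cb {c : Tm F12} (hc : c = ca ∨ c = cb) : c.Ground := by
  rcases hc with rfl | rfl <;> simp [Tm.Ground, ca, cb]

theorem constrHolds_ΓA_iff (σ : Subst F12) : ConstrHolds M ΓA σ ↔ σ 0 = ca ∨ σ 0 = cb := by
  simp [ConstrHolds, substConstr, ΓA, M, Set.image_insert_eq, Set.insert_subset_iff, ca, cb]

theorem constrHolds_ΓB_iff (σ : Subst F12) : ConstrHolds M ΓB σ ↔ σ 0 = ca ∨ σ 0 = cb := by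
  simp [ConstrHolds, substConstr, ΓB, M, Set.image_insert_eq, Set.insert_subset_iff, ca, cb]

theorem biUnion_applyClass_A : ⋃ σ ∈ {σ | GroundingForClass σ A}, applyClass M A σ = S := by
  have hmem : ∀ c, c = ca ∨ c = cb → ∀ ct ∈ A,
      ct.term.subst (fun _ => c) ∈ ⋃ σ ∈ {σ | GroundingForClass σ A}, applyClass M A σ :=
    fun c hc ct hct => subst_mem_biUnion_applyClass (fun _ => ground_of_eq_ca_or_eq_cb hc) hct
      (by rcases hct with rfl | rfl | rfl <;> exact (constrHolds_ΓA_iff _).2 hc)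
  ext t
  constructor
  · simp only [Set.mem_iUnion₂, applyClass]
    rintro ⟨σ, -, ct, hct, hσ, rfl⟩
    rcases hct with rfl | rfl | rfl
    · rcases (constrHolds_ΓA_iff σ).1 hσ with h | h <;> simp [S, h]
    · simp [S, ca]
    · simp [S, cb]
  · rintro (rfl | rfl | rfl | rfl)
    · simpa using hmem ca (.inl rfl) ⟨ΓA, Tm.app f [Tm.var 0]⟩ (by simp [A])
    · simpa using hmem cb (.inr rfl) ⟨ΓA, Tm.app f [Tm.var 0]⟩ (by simp [A])
    · simpa [ca] using hmem ca (.inl rfl) ⟨ΓA, Tm.app g [ca]⟩ (by simp [A])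
    · simpa [cb] using hmem ca (.inl rfl) ⟨ΓA, Tm.app g [cb]⟩ (by simp [A])

theorem biUnion_applyClass_B : ⋃ σ ∈ {σ | GroundingForClass σ B}, applyClass M B σ = S := by
  have hmem : ∀ c, c = ca ∨ c = cb → ∀ ct ∈ B,
      ct.term.subst (fun _ => c) ∈ ⋃ σ ∈ {σ | GroundingForClass σ B}, applyClass M B σ :=
    fun c hc ct hct => subst_mem_biUnion_applyClass (fun _ => ground_of_eq_ca_or_eq_cb hc) hct
      (by rcases hct with rfl | rfl | rfl <;> exact (constrHolds_ΓB_iff _).2 hc)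
  ext t
  constructor
  · simp only [Set.mem_iUnion₂, applyClass]
    rintro ⟨σ, -, ct, hct, hσ, rfl⟩
    rcases hct with rfl | rfl | rfl
    · simp [S, ca]
    · simp [S, cb]
    · rcases (constrHolds_ΓB_iff σ).1 hσ with h | h <;> simp [S, h]
  · rintro (rfl | rfl | rfl | rfl)
    · simpa [ca] using hmem ca (.inl rfl) ⟨ΓB, Tm.app f [ca]⟩ (by simp [B])
    · simpa [cb] using hmem ca (.inl rfl) ⟨ΓB, Tm.app f [cb]⟩ (by simp [B])
    · simpa using hmem ca (.inl rfl) ⟨ΓB, Tm.app g [Tm.var 0]⟩ (by simp [B])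
    · simpa using hmem cb (.inr rfl) ⟨ΓB, Tm.app g [Tm.var 0]⟩ (by simp [B])

theorem gnd_A : gnd M A = {S} := by
  have hsep : sepVars A = ∅ :=
    sepVars_eq_empty_of_ground (ct := ⟨ΓA, Tm.app g [ca]⟩) (by simp [A]) (by simp [Tm.Ground, ca])
  have hsat : ∀ ct ∈ A, ConstrSat M ct.constr := by
    rintro ct (rfl | rfl | rfl) <;> exact ⟨fun _ => ca, (constrHolds_ΓA_iff _).2 (.inl rfl)⟩
  rw [gnd_eq_singleton hsep hsat, biUnion_applyClass_A]

theorem gnd_B : gnd M B = {S} := by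
  have hsep : sepVars B = ∅ :=
    sepVars_eq_empty_of_ground (ct := ⟨ΓB, Tm.app f [ca]⟩) (by simp [B]) (by simp [Tm.Ground, ca])
  have hsat : ∀ ct ∈ B, ConstrSat M ct.constr := by
    rintro ct (rfl | rfl | rfl) <;> exact ⟨fun _ => ca, (constrHolds_ΓB_iff _).2 (.inl rfl)⟩
  rw [gnd_eq_singleton hsep hsat, biUnion_applyClass_B]

theorem not_subsumesByMatching_A_B : ¬ SubsumesByMatching M A B := fun h => by
  obtain ⟨ct', hct', ρ, heq⟩ := h.exists_instance (ct := ⟨ΓB, Tm.app g [Tm.var 0]⟩) (by simp [B])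
  rcases hct' with rfl | rfl | rfl <;> simp [ca, cb] at heq

theorem not_subsumesByMatching_B_A : ¬ SubsumesByMatching M B A := fun h => by
  obtain ⟨ct', hct', ρ, heq⟩ := h.exists_instance (ct := ⟨ΓA, Tm.app f [Tm.var 0]⟩) (by simp [A])
  rcases hct' with rfl | rfl | rfl <;> simp [ca, cb] at heq

end Counterexample

open F12 in
/-- The converse of `subsumption by matching implies
subsumption` fails. -/
theorem matching_converse_fails :
    let ca : Tm F12 := Tm.app a []
    let cb : Tm F12 := Tm.app b []
    let M : Set (Tm F12) :=
      {ca, cb, Tm.app f [ca], Tm.app f [cb], Tm.app g [ca], Tm.app g [cb]}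
    let ΓA : Set (Tm F12) := {Tm.app f [Tm.var 0], Tm.app g [ca], Tm.app g [cb]}
    let ΓB : Set (Tm F12) := {Tm.app f [ca], Tm.app f [cb], Tm.app g [Tm.var 0]}
    let A : CClass F12 :=
      {⟨ΓA, Tm.app f [Tm.var 0]⟩, ⟨ΓA, Tm.app g [ca]⟩, ⟨ΓA, Tm.app g [cb]⟩}
    let B : CClass F12 :=
      {⟨ΓB, Tm.app f [ca]⟩, ⟨ΓB, Tm.app f [cb]⟩, ⟨ΓB, Tm.app g [Tm.var 0]⟩}
    gnd M A = gnd M B ∧ Subsumes M A B ∧ Subsumes M B A ∧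
      ¬ SubsumesByMatching M A B ∧ ¬ SubsumesByMatching M B A := by
  have hgnd : gnd Counterexample.M Counterexample.A = gnd Counterexample.M Counterexample.B :=
    Counterexample.gnd_A.trans Counterexample.gnd_B.symm
  exact ⟨hgnd, subsumes_of_gnd_subset hgnd.ge, subsumes_of_gnd_subset hgnd.le,
    Counterexample.not_subsumesByMatching_A_B, Counterexample.not_subsumesByMatching_B_A⟩

end NGCC
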